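/- For a countable semigroup S the following are equivalent: (1) S is ℵ₀-categorical; (2) the semigroup S⁰, obtained from S by adjoining a new absorbing zero element, is ℵ₀-categorical; (3) the semigroup S¹, obtained from S by adjoining a new identity element, is ℵ₀-categorical. -/

import Mathlib

/-- Two `n`-tuples of a semigroup are automorphically equivalent if some semigroup
automorphism maps one to the other componentwise. -/
def AutRel (S : Type*) [Semigroup S] {n : ℕ} (a b : Fin n → S) : Prop :=
  ∃ φ : S ≃* S, ∀ k, φ (a k) = b k

/-- A semigroup is ℵ₀-categorical if, for every `n ≥ 1`, the action of its automorphism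
group on `n`-tuples has only finitely many orbits. -/
def Aleph0Categorical (S : Type*) [Semigroup S] : Prop :=
  ∀ n : ℕ, 1 ≤ n → ∃ t : Set (Fin n → S), t.Finite ∧
    ∀ a : Fin n → S, ∃ b ∈ t, AutRel S b a

/-!
Adjoining a new zero or a new identity to `S` adds a single element `o` that every automorphism
fixes, so the automorphisms of the extension are exactly the extensions of those of `S`.
Hence orbits of `n`-tuples of `S` are orbits of `n`-tuples of the extension avoiding `o`, and
an orbit of `n`-tuples of the extension is determined by the set of positions holding `o`
together with the orbit of an `n`-tuple of `S` (put any element of `S` at those positions).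
-/

open Function

def HasFiniteCover {α : Type*} (R : α → α → Prop) : Prop :=
  ∃ t : Set α, t.Finite ∧ ∀ a, ∃ b ∈ t, R b a

namespace HasFiniteCover

variable {α β : Type*} {R : α → α → Prop} {R' : β → β → Prop}

lemma of_injective (g : α → β) (hg : Injective g)
    (hR : ∀ a c, R' c (g a) → ∃ b, g b = c ∧ R b a) (h : HasFiniteCover R') :
    HasFiniteCover R := by
  obtain ⟨t, ht, hcover⟩ := h
  refine ⟨g ⁻¹' t, ht.preimage hg.injOn, fun a => ?_⟩
  obtain ⟨c, hct, hca⟩ := hcover (g a)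
  obtain ⟨b, rfl, hba⟩ := hR a c hca
  exact ⟨b, hct, hba⟩

lemma of_surjective {M : Type*} [Finite M] (F : M → α → β)
    (hF : ∀ y, ∃ m x, F m x = y) (hR : ∀ m x x', R x x' → R' (F m x) (F m x'))
    (h : HasFiniteCover R) : HasFiniteCover R' := by
  obtain ⟨t, ht, hcover⟩ := h
  refine ⟨uncurry F '' (Set.univ ×ˢ t), (Set.finite_univ.prod ht).image _, fun y => ?_⟩
  obtain ⟨m, x, rfl⟩ := hF y
  obtain ⟨b, hbt, hbx⟩ := hcover x
  exact ⟨F m b, ⟨(m, b), ⟨trivial, hbt⟩, rfl⟩, hR m b x hbx⟩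

end HasFiniteCover

lemma Aleph0Categorical.of_finite (S : Type*) [Semigroup S] [Finite S] :
    Aleph0Categorical S :=
  fun _ _ => ⟨Set.univ, Set.finite_univ, fun a => ⟨a, trivial, MulEquiv.refl S, fun _ => rfl⟩⟩

section AdjoinPoint

variable {S T : Type*} [Semigroup S] [Semigroup T] {i : S →ₙ* T} {o : T}

lemma exists_mulEquiv_comp_eq (hi : Injective i) (hrange : Set.range i = {o}ᶜ) (Φ : T ≃* T)
    (hΦ : Φ o = o) : ∃ φ : S ≃* S, ∀ s, i (φ s) = Φ (i s) := by
  have hmem : ∀ x, x ∈ Set.range i ↔ Φ x ∈ Set.range i := by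
    intro x
    rw [hrange, Set.mem_compl_singleton_iff, Set.mem_compl_singleton_iff,
      Φ.injective.ne_iff' hΦ]
  let e := Equiv.ofInjective i hi
  let φ : S ≃ S := e.trans ((Φ.toEquiv.subtypeEquiv hmem).trans e.symm)
  have hφ : ∀ s, i (φ s) = Φ (i s) := fun s => Equiv.apply_ofInjective_symm hi _
  refine ⟨⟨φ, fun a b => hi ?_⟩, hφ⟩
  change i (φ (a * b)) = i (φ a * φ b)
  rw [hφ, map_mul i, map_mul Φ, ← hφ, ← hφ, map_mul i]

lemma AutRel.exists_comp_eq_of_comp (hi : Injective i) (hrange : Set.range i = {o}ᶜ)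
    (hfix : ∀ Φ : T ≃* T, Φ o = o) {n : ℕ} {a : Fin n → S} {c : Fin n → T}
    (h : AutRel T c (i ∘ a)) : ∃ b, i ∘ b = c ∧ AutRel S b a := by
  obtain ⟨Φ, hΦ⟩ := h
  have hc : ∀ k, ∃ s, i s = c k := fun k => by
    rw [← Set.mem_range, hrange, Set.mem_compl_singleton_iff, ← Φ.injective.ne_iff, hfix, hΦ]
    exact hrange.subset (Set.mem_range_self (a k))
  choose b hb using hc
  obtain ⟨φ, hφ⟩ := exists_mulEquiv_comp_eq hi hrange Φ (hfix Φ)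
  exact ⟨b, funext hb, φ, fun k => hi (by rw [hφ, hb, hΦ]; rfl)⟩

lemma Aleph0Categorical.of_adjoinPoint (hi : Injective i) (hrange : Set.range i = {o}ᶜ)
    (hfix : ∀ Φ : T ≃* T, Φ o = o) (h : Aleph0Categorical T) : Aleph0Categorical S :=
  fun n hn => (HasFiniteCover.of_injective (i ∘ ·) hi.comp_left fun _ _ hc =>
    hc.exists_comp_eq_of_comp hi hrange hfix) (h n hn)

lemma Aleph0Categorical.adjoinPoint (hrange : Set.range i = {o}ᶜ)
    (hfix : ∀ Φ : T ≃* T, Φ o = o) (hext : ∀ φ : S ≃* S, ∃ Φ : T ≃* T, ∀ s, Φ (i s) = i (φ s))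
    (h : Aleph0Categorical S) : Aleph0Categorical T := by
  classical
  have hmem : ∀ x, x ≠ o → x ∈ Set.range i := fun x hx => hrange ▸ hx
  rcases isEmpty_or_nonempty S with _ | _
  · have ho : ∀ x, x = o := fun x => by_contra fun hx => isEmptyElim (hmem x hx).choose
    have : Subsingleton T := ⟨fun x y => (ho x).trans (ho y).symm⟩
    exact Aleph0Categorical.of_finite T
  intro n hn
  let fill : (Fin n → Bool) → (Fin n → S) → Fin n → T := fun m x k => if m k then o else i (x k)
  refine HasFiniteCover.of_surjective (R := AutRel S) (R' := AutRel T) fill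
    (fun y => ⟨fun k => y k = o, invFun i ∘ y, ?_⟩) ?_ (h n hn)
  · funext k
    by_cases hk : y k = o
    · simp [fill, hk]
    · simp [fill, hk, invFun_eq (hmem _ hk)]
  · rintro m x x' ⟨φ, hφ⟩
    obtain ⟨Φ, hΦ⟩ := hext φ
    exact ⟨Φ, fun k => by simp only [fill, apply_ite Φ, hfix, hΦ, hφ]⟩

lemma aleph0Categorical_iff_of_adjoinPoint (hi : Injective i) (hrange : Set.range i = {o}ᶜ)
    (hfix : ∀ Φ : T ≃* T, Φ o = o)
    (hext : ∀ φ : S ≃* S, ∃ Φ : T ≃* T, ∀ s, Φ (i s) = i (φ s)) :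
    Aleph0Categorical S ↔ Aleph0Categorical T :=
  ⟨.adjoinPoint hrange hfix hext, .of_adjoinPoint hi hrange hfix⟩

end AdjoinPoint

def MulEquiv.withZeroCongr {α β : Type*} [Mul α] [Mul β] (e : α ≃* β) :
    WithZero α ≃* WithZero β :=
  { e.toEquiv.optionCongr with
    map_mul' := by
      rintro (_ | a) (_ | b)
      exacts [rfl, rfl, rfl, congrArg some (map_mul e a b)] }

theorem aleph0Categorical_withZero_withOne (S : Type*) [Semigroup S] :
    (Aleph0Categorical S ↔ Aleph0Categorical (WithZero S)) ∧
    (Aleph0Categorical S ↔ Aleph0Categorical (WithOne S)) :=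
  -- `WithZero S` and `WithOne S` are both `Option S`, with `↑` being `some`.
  ⟨aleph0Categorical_iff_of_adjoinPoint (i := ⟨(↑), WithZero.coe_mul⟩) WithZero.coe_injective
      (Set.isCompl_range_some_none S).eq_compl map_zero
      fun φ => ⟨φ.withZeroCongr, fun _ => rfl⟩,
    aleph0Categorical_iff_of_adjoinPoint (i := WithOne.coeMulHom) WithOne.coe_injective
      (Set.isCompl_range_some_none S).eq_compl map_one
      fun φ => ⟨φ.withOneCongr, fun _ => rfl⟩⟩
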